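/- For every n ≥ 1, every nondeterministic Büchi automaton over the alphabet Σ = {0,1,#,&} recognizing the language L_n has at least 2^{2^n} states. -/
import Mathlib


/-- The length-`n` prefix `w_0 ⋯ w_{n-1}` of an infinite word `w`. -/
def prefixWord {α : Type} (w : ℕ → α) (n : ℕ) : List α :=
  (List.range n).map w

/-- Concatenation of a finite word `u` with an infinite word `v`. -/
def wcat {α : Type} (u : List α) (v : ℕ → α) : ℕ → α :=
  fun i => if h : i < u.length then u.get ⟨i, h⟩ else v (i - u.length)

/-- The four-letter alphabet Σ = {0, 1, #, &}. -/
inductive Sig4 : Type where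
  | zero : Sig4
  | one : Sig4
  | hash : Sig4
  | amp : Sig4
deriving DecidableEq

/-- Encoding of a bit as a letter in {0,1}. -/
def bitSym (b : Bool) : Sig4 := if b then Sig4.one else Sig4.zero

/-- The block `#w#` for a bit-string `w`. -/
def blk (w : List Bool) : List Sig4 :=
  Sig4.hash :: (w.map bitSym ++ [Sig4.hash])

/-- A finite word contains no occurrence of `&`. -/
def NoAmpL (u : List Sig4) : Prop := ∀ a ∈ u, a ≠ Sig4.amp

/-- An infinite word contains no occurrence of `&`. -/
def NoAmpW (v : ℕ → Sig4) : Prop := ∀ i, v i ≠ Sig4.amp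

/-- The finite word `p` occurs as a factor of the infinite word `v`. -/
def OccursInW (p : List Sig4) (v : ℕ → Sig4) : Prop :=
  ∃ i, prefixWord (fun j => v (i + j)) p.length = p

/-- The ω-language `L_n`: words `u · & · v` with `u ∈ {0,1,#}^*`, `v ∈ {0,1,#}^ω`
such that every block `#w#` (with `w ∈ {0,1}^n`) occurring in `v` also occurs in `u`. -/
def Ln (n : ℕ) : Set (ℕ → Sig4) :=
  { x | ∃ (u : List Sig4) (v : ℕ → Sig4), NoAmpL u ∧ NoAmpW v ∧
      x = wcat (u ++ [Sig4.amp]) v ∧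
      ∀ w : List Bool, w.length = n → OccursInW (blk w) v → blk w <:+: u }

/-- The language of finite words `F_n`: words `u · & · v` with `u, v ∈ {0,1,#}^*`
such that if the last `n+2` letters of `v` form a block `#w#` with `w ∈ {0,1}^n`,
then `#w#` occurs in `u`. -/
def Fn (n : ℕ) : Set (List Sig4) :=
  { x | ∃ u v : List Sig4, NoAmpL u ∧ NoAmpL v ∧
      x = u ++ Sig4.amp :: v ∧
      ∀ w : List Bool, w.length = n → blk w <:+ v → blk w <:+: u }

/-- A nondeterministic Büchi automaton over alphabet `A` with state type `S`. -/
structure NBA (A : Type) (S : Type) where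
  init : S
  trans : S → A → S → Prop
  acc : Set S

/-- `r` is a run of `M` on the infinite word `w`. -/
def NBA.IsRun {A S : Type} (M : NBA A S) (w : ℕ → A) (r : ℕ → S) : Prop :=
  r 0 = M.init ∧ ∀ i, M.trans (r i) (w i) (r (i + 1))

/-- The ω-language of a nondeterministic Büchi automaton: words admitting a run
that visits the accepting set infinitely often. -/
def NBA.Lang {A S : Type} (M : NBA A S) : Set (ℕ → A) :=
  { w | ∃ r : ℕ → S, M.IsRun w r ∧ ∀ m : ℕ, ∃ n, m ≤ n ∧ r n ∈ M.acc }

namespace LnLB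

lemma bitSym_ne_amp (b : Bool) : bitSym b ≠ Sig4.amp := by cases b <;> simp [bitSym]
lemma bitSym_ne_hash (b : Bool) : bitSym b ≠ Sig4.hash := by cases b <;> simp [bitSym]
lemma bitSym_inj {a b : Bool} (h : bitSym a = bitSym b) : a = b := by
  cases a <;> cases b <;> simp_all [bitSym]

lemma occursInW_iff (p : List Sig4) (v : ℕ → Sig4) :
    OccursInW p v ↔ ∃ i, ∀ k (hk : k < p.length), v (i + k) = p[k] := by
  constructor
  · rintro ⟨i, h⟩
    refine ⟨i, fun k hk => ?_⟩
    have h1 : k < (prefixWord (fun j => v (i + j)) p.length).length := by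
      simpa [prefixWord] using hk
    simpa [prefixWord] using List.getElem_of_eq h h1
  · rintro ⟨i, h⟩
    refine ⟨i, ?_⟩
    apply List.ext_getElem (by simp [prefixWord])
    intro k h1 h2
    simpa [prefixWord] using h k h2

lemma isInfix_iff (p u : List Sig4) :
    p <:+: u ↔ ∃ i, i + p.length ≤ u.length ∧
      ∀ k (hk : k < p.length) (hik : i + k < u.length), u[i + k] = p[k] := by
  constructor
  · rintro ⟨s, t, hst⟩
    subst hst
    refine ⟨s.length, by simp, fun k hk hik => ?_⟩
    rw [List.getElem_append_left (by simp; omega), List.getElem_append_right (by omega)]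
    congr 1
    omega
  · rintro ⟨i, hlen, hget⟩
    have hp : p = (u.drop i).take p.length := by
      apply List.ext_getElem (by simp; omega)
      intro k h1 h2
      rw [List.getElem_take, List.getElem_drop]
      exact (hget k h1 (by omega)).symm
    rw [hp]
    exact ((List.take_prefix _ _).isInfix).trans (List.drop_suffix i u).isInfix


/-- default word -/
def dflt (n : ℕ) : Fin n → Bool := fun _ => false

/-- letter at position `i` of the concatenation `#w₀#w₁⋯` (no wrap-around). -/
def symU (n : ℕ) (L : List (Fin n → Bool)) (i : ℕ) : Sig4 :=
  if h : i % (n+1) = 0 then Sig4.hash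
  else bitSym ((L.getD (i / (n+1)) (dflt n))
    ⟨i % (n+1) - 1, by have := Nat.mod_lt i (show 0 < n+1 by omega); omega⟩)

/-- letter at position `i` of the periodic infinite word cycling through `L`. -/
def symV (n : ℕ) (L : List (Fin n → Bool)) (i : ℕ) : Sig4 :=
  if h : i % (n+1) = 0 then Sig4.hash
  else bitSym ((L.getD ((i / (n+1)) % L.length) (dflt n))
    ⟨i % (n+1) - 1, by have := Nat.mod_lt i (show 0 < n+1 by omega); omega⟩)

def uOf (n : ℕ) (L : List (Fin n → Bool)) : List Sig4 :=
  List.ofFn (fun i : Fin (L.length * (n+1) + 1) => symU n L i)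

def vOf (n : ℕ) (L : List (Fin n → Bool)) : ℕ → Sig4 :=
  if L = [] then fun _ => Sig4.zero else symV n L

lemma length_uOf (n : ℕ) (L : List (Fin n → Bool)) :
    (uOf n L).length = L.length * (n+1) + 1 := by simp [uOf]

lemma getElem_uOf (n : ℕ) (L : List (Fin n → Bool)) (i : ℕ) (h : i < (uOf n L).length) :
    (uOf n L)[i] = symU n L i := by
  simp only [uOf]
  rw [List.getElem_ofFn]

lemma symU_ne_amp (n : ℕ) (L : List (Fin n → Bool)) (i : ℕ) : symU n L i ≠ Sig4.amp := by
  unfold symU; split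
  · simp
  · exact bitSym_ne_amp _

lemma noAmpL_uOf (n : ℕ) (L : List (Fin n → Bool)) : NoAmpL (uOf n L) := by
  intro a ha
  simp only [uOf, List.mem_ofFn] at ha
  obtain ⟨i, rfl⟩ := ha
  exact symU_ne_amp n L i

lemma noAmpW_vOf (n : ℕ) (L : List (Fin n → Bool)) : NoAmpW (vOf n L) := by
  intro i
  unfold vOf
  split
  · simp
  · unfold symV; split
    · simp
    · exact bitSym_ne_amp _

lemma blk_length (w : List Bool) : (blk w).length = w.length + 2 := by simp [blk]

lemma blk_getElem_zero (w : List Bool) : (blk w)[0]'(by simp [blk]) = Sig4.hash := rfl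

lemma blk_getElem_succ (w : List Bool) (m : ℕ) (hm : m < w.length) :
    (blk w)[m+1]'(by simp [blk]; omega) = bitSym (w[m]) := by
  simp only [blk, List.getElem_cons_succ]
  rw [List.getElem_append_left (by simpa using hm)]
  simp

lemma blk_getElem_last (w : List Bool) :
    (blk w)[w.length+1]'(by simp [blk]) = Sig4.hash := by
  simp only [blk, List.getElem_cons_succ]
  rw [List.getElem_append_right (by simp)]
  simp

lemma wcat_lt {α : Type} (u : List α) (v : ℕ → α) {i : ℕ} (h : i < u.length) :
    wcat u v i = u[i] := by simp [wcat, h]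

lemma wcat_ge {α : Type} (u : List α) (v : ℕ → α) {i : ℕ} (h : u.length ≤ i) :
    wcat u v i = v (i - u.length) := by
  have : ¬ i < u.length := by omega
  simp [wcat, this]

lemma amp_iff {u : List Sig4} {v : ℕ → Sig4} (hu : NoAmpL u) (hv : NoAmpW v) (i : ℕ) :
    wcat (u ++ [Sig4.amp]) v i = Sig4.amp ↔ i = u.length := by
  rcases lt_trichotomy i u.length with h | h | h
  · rw [wcat_lt _ _ (by simp; omega), List.getElem_append_left h]
    simp only [iff_false_intro (by omega : ¬ i = u.length), iff_false]
    exact hu _ (List.getElem_mem _)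
  · subst h
    rw [wcat_lt _ _ (by simp)]
    simp [List.getElem_concat_length]
  · rw [wcat_ge _ _ (by simp; omega)]
    simp only [iff_false_intro (by omega : ¬ i = u.length), iff_false]
    exact hv _

lemma decomp_unique {u u' : List Sig4} {v v' : ℕ → Sig4}
    (hu : NoAmpL u) (hv : NoAmpW v) (hu' : NoAmpL u') (hv' : NoAmpW v')
    (h : wcat (u ++ [Sig4.amp]) v = wcat (u' ++ [Sig4.amp]) v') : u = u' ∧ v = v' := by
  have hlen : u.length = u'.length := by
    have h1 := (amp_iff hu hv u.length).mpr rfl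
    rw [h] at h1
    exact (amp_iff hu' hv' _).mp h1
  constructor
  · apply List.ext_getElem hlen
    intro i h1 h2
    have e1 : wcat (u ++ [Sig4.amp]) v i = u[i] := by
      rw [wcat_lt _ _ (by simp; omega), List.getElem_append_left h1]
    have e2 : wcat (u' ++ [Sig4.amp]) v' i = u'[i] := by
      rw [wcat_lt _ _ (by simp; omega), List.getElem_append_left h2]
    rw [← e1, h, e2]
  · funext j
    have e1 : wcat (u ++ [Sig4.amp]) v (u.length + 1 + j) = v j := by
      rw [wcat_ge _ _ (by simp)]
      congr 1
      simp
    have e2 : wcat (u' ++ [Sig4.amp]) v' (u.length + 1 + j) = v' j := by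
      rw [wcat_ge _ _ (by simp; omega)]
      congr 1
      simp [hlen]
    rw [← e1, h, e2]


lemma blk_infix_uOf {n : ℕ} {L : List (Fin n → Bool)} {g : Fin n → Bool} (hg : g ∈ L) :
    blk (List.ofFn g) <:+: uOf n L := by
  obtain ⟨j, hj, hgj⟩ := List.mem_iff_getElem.mp hg
  rw [isInfix_iff]
  refine ⟨(n+1) * j, ?_, ?_⟩
  · rw [length_uOf, blk_length, List.length_ofFn]
    have h1 : (n+1) * (j+1) ≤ (n+1) * L.length := Nat.mul_le_mul_left _ (by omega)
    have h2 : (n+1) * (j+1) = (n+1) * j + (n+1) := by ring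
    have h3 : (n+1) * L.length = L.length * (n+1) := by ring
    linarith
  · intro k hk hik
    rw [getElem_uOf]
    rw [blk_length, List.length_ofFn] at hk
    rcases k with _ | m
    · have e1 : ((n+1) * j + 0) % (n+1) = 0 := by simp [Nat.mul_mod_right]
      unfold symU
      rw [dif_pos e1]
      exact (blk_getElem_zero _).symm
    · rcases Nat.lt_or_ge m n with hm | hm
      · have e1 : ((n+1) * j + (m+1)) % (n+1) = m + 1 := by
          rw [Nat.mul_add_mod]; exact Nat.mod_eq_of_lt (by omega)
        have e2 : ((n+1) * j + (m+1)) / (n+1) = j := by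
          rw [Nat.mul_add_div (by omega), Nat.div_eq_of_lt (by omega), Nat.add_zero]
        unfold symU
        rw [dif_neg (by rw [e1]; omega)]
        have hblk : (blk (List.ofFn g))[m+1]'(by simp [blk_length]; omega)
            = bitSym ((List.ofFn g)[m]'(by simp; omega)) :=
          blk_getElem_succ (List.ofFn g) m (by simp; omega)
        rw [hblk, List.getElem_ofFn]
        simp only [e1, e2, Nat.add_sub_cancel]
        rw [List.getD_eq_getElem L (dflt n) hj, hgj]
      · have hm' : m = n := by omega
        subst hm'
        have e1 : ((m+1) * j + (m+1)) % (m+1) = 0 := by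
          rw [Nat.mul_add_mod]; simp
        unfold symU
        rw [dif_pos e1]
        have hblk := blk_getElem_last (List.ofFn g)
        simp only [List.length_ofFn] at hblk
        rw [hblk]

lemma occurs_vOf {n : ℕ} {L : List (Fin n → Bool)} {g : Fin n → Bool} (hg : g ∈ L) (N : ℕ) :
    ∃ i, N ≤ i ∧ ∀ k (hk : k < (blk (List.ofFn g)).length),
      vOf n L (i + k) = (blk (List.ofFn g))[k] := by
  have hL : L ≠ [] := List.ne_nil_of_mem hg
  have hv : vOf n L = symV n L := if_neg hL
  obtain ⟨j, hj, hgj⟩ := List.mem_iff_getElem.mp hg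
  refine ⟨(n+1) * (j + N * L.length), ?_, ?_⟩
  · have h1 : 1 ≤ L.length := by omega
    calc N = N * 1 := (mul_one N).symm
      _ ≤ N * L.length := Nat.mul_le_mul_left N h1
      _ ≤ j + N * L.length := Nat.le_add_left _ _
      _ ≤ (n+1) * (j + N * L.length) := Nat.le_mul_of_pos_left _ (by omega)
  · intro k hk
    rw [blk_length, List.length_ofFn] at hk
    rw [hv]
    have hq : (j + N * L.length) % L.length = j := by
      rw [Nat.add_mul_mod_self_right, Nat.mod_eq_of_lt hj]
    rcases k with _ | m
    · have e1 : ((n+1) * (j + N * L.length) + 0) % (n+1) = 0 := by simp [Nat.mul_mod_right]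
      unfold symV
      rw [dif_pos e1]
      exact (blk_getElem_zero _).symm
    · rcases Nat.lt_or_ge m n with hm | hm
      · have e1 : ((n+1) * (j + N * L.length) + (m+1)) % (n+1) = m + 1 := by
          rw [Nat.mul_add_mod]; exact Nat.mod_eq_of_lt (by omega)
        have e2 : ((n+1) * (j + N * L.length) + (m+1)) / (n+1) = j + N * L.length := by
          rw [Nat.mul_add_div (by omega), Nat.div_eq_of_lt (by omega), Nat.add_zero]
        unfold symV
        rw [dif_neg (by rw [e1]; omega)]
        have hblk : (blk (List.ofFn g))[m+1]'(by simp [blk_length]; omega)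
            = bitSym ((List.ofFn g)[m]'(by simp; omega)) :=
          blk_getElem_succ (List.ofFn g) m (by simp; omega)
        rw [hblk, List.getElem_ofFn]
        simp only [e1, e2, hq, Nat.add_sub_cancel]
        rw [List.getD_eq_getElem L (dflt n) hj, hgj]
      · have hm' : m = n := by omega
        subst hm'
        have e1 : ((m+1) * (j + N * L.length) + (m+1)) % (m+1) = 0 := by
          rw [Nat.mul_add_mod]; simp
        unfold symV
        rw [dif_pos e1]
        have hblk := blk_getElem_last (List.ofFn g)
        simp only [List.length_ofFn] at hblk
        rw [hblk]

lemma mem_of_blk_infix {n : ℕ} {L : List (Fin n → Bool)} {w : List Bool}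
    (hw : w.length = n) (h : blk w <:+: uOf n L) : ∃ g ∈ L, w = List.ofFn g := by
  rw [isInfix_iff] at h
  obtain ⟨i, hlen, hget⟩ := h
  rw [length_uOf, blk_length, hw] at hlen
  have h0 := hget 0 (by rw [blk_length]; omega) (by rw [length_uOf]; linarith)
  rw [getElem_uOf, blk_getElem_zero] at h0
  simp only [Nat.add_zero] at h0
  have hmod : i % (n+1) = 0 := by
    by_contra hc
    unfold symU at h0
    rw [dif_neg hc] at h0
    exact bitSym_ne_hash _ h0
  obtain ⟨j, rfl⟩ : ∃ j, i = (n+1) * j :=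
    ⟨i / (n+1), (Nat.mul_div_cancel' (Nat.dvd_of_mod_eq_zero hmod)).symm⟩
  have hj : j < L.length := by
    have h1 : (n+1) * (j+1) ≤ (n+1) * L.length := by
      have h2 : (n+1) * (j+1) = (n+1) * j + (n+1) := by ring
      have h3 : (n+1) * L.length = L.length * (n+1) := by ring
      linarith
    have := Nat.le_of_mul_le_mul_left h1 (by omega)
    omega
  refine ⟨L[j], List.getElem_mem _, ?_⟩
  apply List.ext_getElem (by simp [hw])
  intro m h1 h2
  rw [List.getElem_ofFn]
  have hm : m < n := by rw [hw] at h1; exact h1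
  have h2' := hget (m+1) (by rw [blk_length]; omega) (by rw [length_uOf]; linarith)
  rw [getElem_uOf, blk_getElem_succ w m (by omega)] at h2'
  have e1 : ((n+1) * j + (m+1)) % (n+1) = m + 1 := by
    rw [Nat.mul_add_mod]; exact Nat.mod_eq_of_lt (by omega)
  have e2 : ((n+1) * j + (m+1)) / (n+1) = j := by
    rw [Nat.mul_add_div (by omega), Nat.div_eq_of_lt (by omega), Nat.add_zero]
  unfold symU at h2'
  rw [dif_neg (by rw [e1]; omega)] at h2'
  simp only [e1, e2, Nat.add_sub_cancel] at h2'
  rw [List.getD_eq_getElem L (dflt n) hj] at h2'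
  exact (bitSym_inj h2').symm

lemma mem_of_occurs_vOf {n : ℕ} {L : List (Fin n → Bool)} {w : List Bool}
    (hw : w.length = n) (h : OccursInW (blk w) (vOf n L)) : ∃ g ∈ L, w = List.ofFn g := by
  rw [occursInW_iff] at h
  obtain ⟨i, hget⟩ := h
  by_cases hL : L = []
  · exfalso
    have h0 := hget 0 (by rw [blk_length]; omega)
    rw [blk_getElem_zero] at h0
    unfold vOf at h0
    rw [if_pos hL] at h0
    exact absurd h0 (by simp)
  · have hv : vOf n L = symV n L := if_neg hL
    rw [hv] at hget
    have h0 := hget 0 (by rw [blk_length]; omega)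
    rw [blk_getElem_zero] at h0
    simp only [Nat.add_zero] at h0
    have hmod : i % (n+1) = 0 := by
      by_contra hc
      unfold symV at h0
      rw [dif_neg hc] at h0
      exact bitSym_ne_hash _ h0
    obtain ⟨j, rfl⟩ : ∃ j, i = (n+1) * j :=
      ⟨i / (n+1), (Nat.mul_div_cancel' (Nat.dvd_of_mod_eq_zero hmod)).symm⟩
    have hq : j % L.length < L.length :=
      Nat.mod_lt _ (by cases L with | nil => exact absurd rfl hL | cons a l => simp)
    refine ⟨L[j % L.length], List.getElem_mem _, ?_⟩
    apply List.ext_getElem (by simp [hw])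
    intro m h1 h2
    rw [List.getElem_ofFn]
    have hm : m < n := by rw [hw] at h1; exact h1
    have h2' := hget (m+1) (by rw [blk_length]; omega)
    rw [blk_getElem_succ w m (by omega)] at h2'
    have e1 : ((n+1) * j + (m+1)) % (n+1) = m + 1 := by
      rw [Nat.mul_add_mod]; exact Nat.mod_eq_of_lt (by omega)
    have e2 : ((n+1) * j + (m+1)) / (n+1) = j := by
      rw [Nat.mul_add_div (by omega), Nat.div_eq_of_lt (by omega), Nat.add_zero]
    unfold symV at h2'
    rw [dif_neg (by rw [e1]; omega)] at h2'
    simp only [e1, e2, Nat.add_sub_cancel] at h2'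
    rw [List.getD_eq_getElem L (dflt n) hq] at h2'
    exact (bitSym_inj h2').symm

lemma xT_mem_Ln (n : ℕ) (L : List (Fin n → Bool)) :
    wcat (uOf n L ++ [Sig4.amp]) (vOf n L) ∈ Ln n := by
  refine ⟨uOf n L, vOf n L, noAmpL_uOf n L, noAmpW_vOf n L, rfl, ?_⟩
  intro w hw hocc
  obtain ⟨g, hg, rfl⟩ := mem_of_occurs_vOf hw hocc
  exact blk_infix_uOf hg


lemma key {n : ℕ} {S : Type} {M : NBA Sig4 S} (hL : M.Lang = Ln n)
    (L L' : List (Fin n → Bool)) (r r' : ℕ → S) (m m' : ℕ)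
    (hr : M.IsRun (wcat (uOf n L ++ [Sig4.amp]) (vOf n L)) r)
    (hr' : M.IsRun (wcat (uOf n L' ++ [Sig4.amp]) (vOf n L')) r')
    (hacc' : ∀ k : ℕ, ∃ p, k ≤ p ∧ r' p ∈ M.acc)
    (hm : (uOf n L).length + 1 ≤ m) (hm' : (uOf n L').length + 1 ≤ m')
    (heq : r m = r' m') (g : Fin n → Bool) (hg : g ∈ L') : g ∈ L := by
  set x : ℕ → Sig4 := wcat (uOf n L ++ [Sig4.amp]) (vOf n L) with hx
  set x' : ℕ → Sig4 := wcat (uOf n L' ++ [Sig4.amp]) (vOf n L') with hx'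
  set y : ℕ → Sig4 := fun j => if j < m then x j else x' (m' + (j - m)) with hy
  set ρ : ℕ → S := fun j => if j < m then r j else r' (m' + (j - m)) with hρ
  have hyL : y ∈ M.Lang := by
    refine ⟨ρ, ⟨?_, ?_⟩, ?_⟩
    · show (if 0 < m then r 0 else _) = M.init
      rw [if_pos (by omega)]
      exact hr.1
    · intro i
      by_cases h1 : i + 1 < m
      · have e0 : ρ i = r i := if_pos (by omega)
        have e1 : ρ (i+1) = r (i+1) := if_pos h1
        have e2 : y i = x i := if_pos (by omega)
        rw [e0, e1, e2]
        exact hr.2 i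
      · by_cases h2 : i < m
        · have h3 : i + 1 = m := by omega
          have e0 : ρ i = r i := if_pos h2
          have e1 : ρ (i+1) = r' (m' + (i + 1 - m)) := if_neg (by omega)
          have e2 : y i = x i := if_pos h2
          rw [e0, e1, e2]
          have e3 : m' + (i + 1 - m) = m' := by omega
          rw [e3, ← heq, ← h3]
          exact hr.2 i
        · have e0 : ρ i = r' (m' + (i - m)) := if_neg h2
          have e1 : ρ (i+1) = r' (m' + (i - m) + 1) := by
            rw [hρ]
            simp only [if_neg (show ¬ i + 1 < m by omega)]
            congr 1
            omega
          have e2 : y i = x' (m' + (i - m)) := if_neg h2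
          rw [e0, e1, e2]
          exact hr'.2 (m' + (i - m))
    · intro k
      obtain ⟨p, hp1, hp2⟩ := hacc' (m' + k)
      refine ⟨m + (p - m'), by omega, ?_⟩
      have e0 : ρ (m + (p - m')) = r' (m' + (m + (p - m') - m)) := if_neg (by omega)
      have e1 : m' + (m + (p - m') - m) = p := by omega
      rw [e0, e1]
      exact hp2
  rw [hL] at hyL
  obtain ⟨u₁, v₁, hu₁, hv₁, hyeq, hcond⟩ := hyL
  set v'' : ℕ → Sig4 := fun j => y ((uOf n L).length + 1 + j) with hv''def
  have hy2 : y = wcat (uOf n L ++ [Sig4.amp]) v'' := by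
    funext i
    by_cases h1 : i < (uOf n L).length + 1
    · have e0 : y i = x i := if_pos (by omega)
      rw [e0, hx, wcat_lt _ _ (by simp; omega), wcat_lt _ _ (by simp; omega)]
    · rw [wcat_ge _ _ (by simp; omega)]
      show y i = y ((uOf n L).length + 1 + (i - ((uOf n L) ++ [Sig4.amp]).length))
      congr 1
      simp only [List.length_append, List.length_cons, List.length_nil]
      omega
  have hnv'' : NoAmpW v'' := by
    intro j
    show y ((uOf n L).length + 1 + j) ≠ Sig4.amp
    by_cases h1 : (uOf n L).length + 1 + j < m
    · have e0 : y ((uOf n L).length + 1 + j) = x ((uOf n L).length + 1 + j) := if_pos h1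
      rw [e0, hx, wcat_ge _ _ (by simp)]
      exact noAmpW_vOf n L _
    · have e0 : y ((uOf n L).length + 1 + j)
          = x' (m' + ((uOf n L).length + 1 + j - m)) := if_neg h1
      rw [e0, hx', wcat_ge _ _ (by simp; omega)]
      exact noAmpW_vOf n L' _
  obtain ⟨he1, he2⟩ := decomp_unique (noAmpL_uOf n L) hnv'' hu₁ hv₁ (by rw [← hy2, hyeq])
  have hocc : OccursInW (blk (List.ofFn g)) v'' := by
    obtain ⟨q, hq, hqget⟩ := occurs_vOf hg (m' - ((uOf n L').length + 1))
    rw [occursInW_iff]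
    set e := m' - ((uOf n L').length + 1) with hedef
    set d := m - ((uOf n L).length + 1) with hddef
    refine ⟨d + (q - e), fun k hk => ?_⟩
    have e0 : v'' (d + (q - e) + k) = x' (m' + (d + (q - e) + k - d)) := by
      show y _ = _
      rw [hy]
      simp only [if_neg (show ¬ (uOf n L).length + 1 + (d + (q - e) + k) < m by omega)]
      congr 1
      omega
    rw [e0, hx', wcat_ge _ _ (by simp; omega)]
    have e1 : m' + (d + (q - e) + k - d) - ((uOf n L') ++ [Sig4.amp]).length = q + k := by
      simp only [List.length_append, List.length_cons, List.length_nil]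
      omega
    rw [e1]
    exact hqget k hk
  have hinf := hcond (List.ofFn g) (by simp) (he2 ▸ hocc)
  rw [← he1] at hinf
  obtain ⟨g', hg', hgg'⟩ := mem_of_blk_infix (by simp) hinf
  have : g = g' := by
    funext i
    have h5 : i.val < (List.ofFn g).length := by simp [i.isLt]
    have := List.getElem_of_eq hgg' h5
    simpa using this
  rw [this]
  exact hg'

end LnLB

/-- For every n ≥ 1, every nondeterministic Büchi automaton over
the alphabet {0,1,#,&} recognizing `L_n` has at least `2^(2^n)` states. -/
theorem Ln_nba_lower_bound (n : ℕ) (hn : 1 ≤ n)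
    (S : Type) (inst : Fintype S) (M : NBA Sig4 S)
    (hL : M.Lang = Ln n) :
    2 ^ 2 ^ n ≤ @Fintype.card S inst := by
  classical
  have main : ∀ T : Finset (Fin n → Bool),
      wcat (LnLB.uOf n T.toList ++ [Sig4.amp]) (LnLB.vOf n T.toList) ∈ M.Lang := by
    intro T
    rw [hL]
    exact LnLB.xT_mem_Ln n T.toList
  choose r hrun hacc using main
  have hm : ∀ T : Finset (Fin n → Bool),
      ∃ p, (LnLB.uOf n T.toList).length + 1 ≤ p ∧ r T p ∈ M.acc := by
    intro T
    obtain ⟨p, hp1, hp2⟩ := hacc T ((LnLB.uOf n T.toList).length + 1)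
    exact ⟨p, hp1, hp2⟩
  choose m hm1 hm2 using hm
  have hinj : Function.Injective (fun T : Finset (Fin n → Bool) => r T (m T)) := by
    intro T T' h
    simp only at h
    have h1 : ∀ g ∈ T'.toList, g ∈ T.toList := fun g hg =>
      LnLB.key hL T.toList T'.toList (r T) (r T') (m T) (m T')
        (hrun T) (hrun T') (hacc T') (hm1 T) (hm1 T') h g hg
    have h2 : ∀ g ∈ T.toList, g ∈ T'.toList := fun g hg =>
      LnLB.key hL T'.toList T.toList (r T') (r T) (m T') (m T)
        (hrun T') (hrun T) (hacc T) (hm1 T') (hm1 T) h.symm g hg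
    apply Finset.Subset.antisymm
    · intro a ha
      exact Finset.mem_toList.mp (h2 a (Finset.mem_toList.mpr ha))
    · intro a ha
      exact Finset.mem_toList.mp (h1 a (Finset.mem_toList.mpr ha))
  calc 2 ^ 2 ^ n = Fintype.card (Finset (Fin n → Bool)) := by
        simp [Fintype.card_finset, Fintype.card_fun]
    _ ≤ Fintype.card S := Fintype.card_le_of_injective _ hinj
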